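/- Let α, β ∈ ℂ² and write G11 = α·α, G12 = α·β, G22 = β·β, with G11·G22 − G12² ≠ 0. For a complex number a_{12}, the Weyl-reflected central charge 𝔯^{(1)}(c) (obtained by replacing the Gram matrix entries by their reflected values in the rank-2 central charge formula) satisfies 𝔯^{(1)}(c) − c = [3/(G11·G22 − G12²)] · (2G12 − a_{12}G11) · ((a_{12}−1)G11 + 2) · (a_{12}²G11 − a_{12}G11 − 2a_{12}G12 + 2G22 + 2a_{12} − 4). In particular 𝔯^{(1)}(c) = c whenever 2G12 = a_{12}G11 or (1 − a_{12})G11 = 2. -/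
import Mathlib


noncomputable def cGram (g11 g12 g22 : ℂ) : ℂ :=
  2 - 3 * ((4 + g11 * g22) * (g11 - 2 * g12 + g22)
      + 4 * (g11 * g12 - g22 * g11 - g11 * g22 + g22 * g12)) /
    (g11 * g22 - g12 ^ 2)

theorem rank2_reflected_central_charge (g11 g12 g22 a12 : ℂ)
    (hdet : g11 * g22 - g12 ^ 2 ≠ 0) (r11 r12 r22 : ℂ)
    (hr11 : r11 = g11 - 2 * g11 - 2 * g11 + 2 * 2 * g11)
    (hr12 : r12 = g12 - a12 * g11 - 2 * g12 + 2 * a12 * g11)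
    (hr22 : r22 = g22 - a12 * g12 - a12 * g12 + a12 * a12 * g11) :
    cGram r11 r12 r22 - cGram g11 g12 g22 =
      3 / (g11 * g22 - g12 ^ 2) * (2 * g12 - a12 * g11) *
        ((a12 - 1) * g11 + 2) *
        (a12 ^ 2 * g11 - a12 * g11 - 2 * a12 * g12 + 2 * g22 + 2 * a12 - 4) ∧
    ((2 * g12 = a12 * g11 ∨ (1 - a12) * g11 = 2) →
      cGram r11 r12 r22 = cGram g11 g12 g22) := by
  subst hr11 hr12 hr22
  have key : ∀ x y z : ℂ, cGram x y z =
      2 - 3 * ((4 + x * z) * (x - 2 * y + z)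
        + 4 * (x * y - z * x - x * z + z * y)) / (x * z - y ^ 2) := fun _ _ _ => rfl
  have hdet' : (g11 - 2 * g11 - 2 * g11 + 2 * 2 * g11) *
      (g22 - a12 * g12 - a12 * g12 + a12 * a12 * g11) -
      (g12 - a12 * g11 - 2 * g12 + 2 * a12 * g11) ^ 2 = g11 * g22 - g12 ^ 2 := by ring
  have main : cGram (g11 - 2 * g11 - 2 * g11 + 2 * 2 * g11)
      (g12 - a12 * g11 - 2 * g12 + 2 * a12 * g11)
      (g22 - a12 * g12 - a12 * g12 + a12 * a12 * g11) - cGram g11 g12 g22 =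
      3 / (g11 * g22 - g12 ^ 2) * (2 * g12 - a12 * g11) *
        ((a12 - 1) * g11 + 2) *
        (a12 ^ 2 * g11 - a12 * g11 - 2 * a12 * g12 + 2 * g22 + 2 * a12 - 4) := by
    rw [key, key, hdet']
    field_simp
    ring
  refine ⟨main, fun h => ?_⟩
  have : cGram (g11 - 2 * g11 - 2 * g11 + 2 * 2 * g11)
      (g12 - a12 * g11 - 2 * g12 + 2 * a12 * g11)
      (g22 - a12 * g12 - a12 * g12 + a12 * a12 * g11) - cGram g11 g12 g22 = 0 := by
    rw [main]
    rcases h with h | h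
    · have : 2 * g12 - a12 * g11 = 0 := by rw [h]; ring
      rw [this]; ring
    · have : (a12 - 1) * g11 + 2 = 0 := by linear_combination -h
      rw [this]; ring
  linear_combination this
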